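/- arXiv:1308.5217 — 5 statements merged into one kernel-verified Lean document; each statement's English description precedes it below -/
import Mathlib

section
/- Let s_1 > s_2 be real numbers with s_1 > 0, and σ(x) = (e^{s_1 x}, e^{s_2 x}) : ℝ → ℝ². Then the total first curvature ∫_0^∞ (|σ'_1 σ''_2 − σ'_2 σ''_1| / ‖σ'‖²) dx is finite. -/
/-! The Wronskian-type numerator is `|s₁ s₂ (s₂ - s₁)| e^{(s₁+s₂)x}` while the denominator is at
least `s₁² e^{2 s₁ x}`, so the integrand is dominated by a multiple of `e^{-(s₁ - s₂) x}`. -/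

open MeasureTheory Real

lemma deriv_exp_const_mul (c : ℝ) :
    deriv (fun x => exp (c * x)) = fun x => c * exp (c * x) := by
  funext x
  simpa [mul_comm] using (((hasDerivAt_id x).const_mul c).exp).deriv

lemma deriv_deriv_exp_const_mul (c : ℝ) :
    deriv (deriv (fun x => exp (c * x))) = fun x => c * (c * exp (c * x)) := by
  rw [deriv_exp_const_mul]
  funext x
  simpa [mul_comm, mul_assoc] using ((((hasDerivAt_id x).const_mul c).exp).const_mul c).deriv

section ExpCurve

variable {a : ℝ} (b : ℝ)

lemma exp_curve_speed_sq_pos (ha : a ≠ 0) (x : ℝ) :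
    0 < (a * exp (a * x)) ^ 2 + (b * exp (b * x)) ^ 2 := by
  positivity

lemma exp_curve_curvature_le (ha : a ≠ 0) (x : ℝ) :
    |a * exp (a * x) * (b * (b * exp (b * x))) - b * exp (b * x) * (a * (a * exp (a * x)))|
        / ((a * exp (a * x)) ^ 2 + (b * exp (b * x)) ^ 2)
      ≤ |b * (b - a)| / |a| * exp ((b - a) * x) := by
  have hnum : a * exp (a * x) * (b * (b * exp (b * x))) - b * exp (b * x) * (a * (a * exp (a * x)))
      = b * (b - a) * (a * exp (a * x) * exp (b * x)) := by ring
  calc _ = |b * (b - a)| * (|a| * exp (a * x) * exp (b * x))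
          / ((a * exp (a * x)) ^ 2 + (b * exp (b * x)) ^ 2) := by
        simp only [hnum, abs_mul (b * (b - a)), abs_mul _ (exp _), abs_exp]
    _ ≤ |b * (b - a)| * (|a| * exp (a * x) * exp (b * x)) / (a * exp (a * x)) ^ 2 := by
        gcongr
        exact le_add_of_nonneg_right (sq_nonneg _)
    _ = |b * (b - a)| / |a| * exp ((b - a) * x) := by
        rw [sub_mul, exp_sub, mul_pow, ← sq_abs a]
        field_simp

end ExpCurve

theorem stmt6 (s₁ s₂ : ℝ) (h12 : s₂ < s₁) (h1 : 0 < s₁)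
    (σ₁ σ₂ : ℝ → ℝ)
    (hσ₁ : ∀ x, σ₁ x = Real.exp (s₁ * x))
    (hσ₂ : ∀ x, σ₂ x = Real.exp (s₂ * x)) :
    IntegrableOn (fun x =>
      |deriv σ₁ x * deriv (deriv σ₂) x - deriv σ₂ x * deriv (deriv σ₁) x|
        / ((deriv σ₁ x) ^ 2 + (deriv σ₂ x) ^ 2)) (Set.Ici (0:ℝ)) := by
  obtain rfl : σ₁ = fun x => exp (s₁ * x) := funext hσ₁
  obtain rfl : σ₂ = fun x => exp (s₂ * x) := funext hσ₂
  rw [deriv_deriv_exp_const_mul, deriv_deriv_exp_const_mul]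
  simp only [deriv_exp_const_mul]
  have hs₁ : s₁ ≠ 0 := h1.ne'
  have hdom : IntegrableOn (fun x => |s₂ * (s₂ - s₁)| / |s₁| * exp ((s₂ - s₁) * x))
      (Set.Ici 0) :=
    (integrableOn_Ici_iff_integrableOn_Ioi).mpr
      ((integrableOn_exp_mul_Ioi (sub_neg.mpr h12) 0).const_mul _)
  refine hdom.mono' ?_ (ae_of_all _ fun x => ?_)
  · exact (Continuous.div (by fun_prop) (by fun_prop)
      fun x => (exp_curve_speed_sq_pos s₂ hs₁ x).ne').aestronglyMeasurable
  · rw [norm_of_nonneg (by positivity)]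
    exact exp_curve_curvature_le s₂ hs₁ x
end

section
/- Let s > a be real numbers and b ≠ 0, and define σ(x) = (e^{sx}, e^{ax} cos(bx), e^{ax} sin(bx)) : ℝ → ℝ³ with s > 0. Then ∫_0^∞ (‖σ'(x) ∧ σ''(x)‖ / ‖σ'(x)‖²) dx < ∞. -/
/-!
Write `z = a + b i`. Then `σ = (Re e^{sx}, Re e^{zx}, Re (-i e^{zx}))`, and every derivative of a
component `Re (c e^{zx})` is again of this form, `Re (c z^k e^{zx})`, of size at most
`‖c‖ ‖z‖^k e^{ax}`. Hence each coordinate of `σ' ∧ σ''` is `O(e^{(s+a)x})` on `[0, ∞)`, while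
`‖σ'‖² ≥ (σ₁')² = s² e^{2sx}`, so the integrand is `O(e^{(a-s)x})`, which is integrable as `a < s`.
-/

open MeasureTheory

noncomputable def reMulExp (c z : ℂ) (t : ℝ) : ℝ := (c * Complex.exp (z * t)).re

noncomputable def wedgeCoord (f g : ℝ → ℝ) (t : ℝ) : ℝ :=
  deriv f t * deriv (deriv g) t - deriv g t * deriv (deriv f) t

theorem hasDerivAt_reMulExp (c z : ℂ) (t : ℝ) :
    HasDerivAt (reMulExp c z) (reMulExp (c * z) z t) t := by
  have h : HasDerivAt (fun w : ℂ => c * Complex.exp (z * w)) (c * z * Complex.exp (z * t)) t := by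
    simpa [mul_comm, mul_left_comm, mul_assoc] using
      (((hasDerivAt_id (t : ℂ)).const_mul z).cexp).const_mul c
  exact h.real_of_complex

theorem deriv_reMulExp (c z : ℂ) : deriv (reMulExp c z) = reMulExp (c * z) z :=
  funext fun t => (hasDerivAt_reMulExp c z t).deriv

theorem reMulExp_ofReal (c s t : ℝ) : reMulExp c s t = c * Real.exp (s * t) := by
  simp [reMulExp, Complex.exp_re]

theorem abs_reMulExp_le (c z : ℂ) (t : ℝ) :
    |reMulExp c z t| ≤ ‖c‖ * Real.exp (z.re * t) := by
  calc |reMulExp c z t| ≤ ‖c * Complex.exp (z * t)‖ := Complex.abs_re_le_norm _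
    _ = ‖c‖ * Real.exp (z.re * t) := by simp [Complex.norm_exp]

theorem abs_mul_sub_mul_le {u₁ u₂ v₁ v₂ A₁ A₂ B₁ B₂ : ℝ} (hu₁ : |u₁| ≤ A₁) (hu₂ : |u₂| ≤ A₂)
    (hv₁ : |v₁| ≤ B₁) (hv₂ : |v₂| ≤ B₂) : |u₁ * v₂ - v₁ * u₂| ≤ A₁ * B₂ + B₁ * A₂ := by
  calc |u₁ * v₂ - v₁ * u₂| ≤ |u₁| * |v₂| + |v₁| * |u₂| := by
        simpa only [abs_mul] using abs_sub (u₁ * v₂) (v₁ * u₂)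
    _ ≤ A₁ * B₂ + B₁ * A₂ := by
        gcongr <;> linarith [abs_nonneg u₁, abs_nonneg v₁]

theorem abs_wedgeCoord_reMulExp_le (c d z w : ℂ) (t : ℝ) :
    |wedgeCoord (reMulExp c z) (reMulExp d w) t|
      ≤ ‖c‖ * ‖d‖ * ‖z‖ * ‖w‖ * (‖z‖ + ‖w‖) * Real.exp ((z.re + w.re) * t) := by
  simp only [wedgeCoord, deriv_reMulExp]
  refine (abs_mul_sub_mul_le (abs_reMulExp_le _ _ t) (abs_reMulExp_le _ _ t)
    (abs_reMulExp_le _ _ t) (abs_reMulExp_le _ _ t)).trans_eq ?_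
  rw [add_mul, Real.exp_add]
  simp only [norm_mul]
  ring

theorem sqrt_sq_add_sq_add_sq_le (u v w : ℝ) : √(u ^ 2 + v ^ 2 + w ^ 2) ≤ |u| + |v| + |w| := by
  rw [Real.sqrt_le_left (by positivity)]
  nlinarith [sq_abs u, sq_abs v, sq_abs w, mul_nonneg (abs_nonneg u) (abs_nonneg v),
    mul_nonneg (abs_nonneg u) (abs_nonneg w), mul_nonneg (abs_nonneg v) (abs_nonneg w)]

theorem exists_sqrt_wedge_reMulExp_le (s : ℝ) (c d z : ℂ) (hz : z.re ≤ s) :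
    ∃ K, ∀ t, 0 ≤ t →
      √(wedgeCoord (reMulExp 1 s) (reMulExp c z) t ^ 2
        + wedgeCoord (reMulExp 1 s) (reMulExp d z) t ^ 2
        + wedgeCoord (reMulExp c z) (reMulExp d z) t ^ 2) ≤ K * Real.exp ((s + z.re) * t) := by
  set A := ‖(s : ℂ)‖ * ‖z‖ * (‖(s : ℂ)‖ + ‖z‖)
  set B := ‖c‖ * ‖d‖ * ‖z‖ * ‖z‖ * (‖z‖ + ‖z‖)
  refine ⟨(‖c‖ + ‖d‖) * A + B, fun t ht => ?_⟩
  have h₁₂ := abs_wedgeCoord_reMulExp_le 1 c s z t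
  have h₁₃ := abs_wedgeCoord_reMulExp_le 1 d s z t
  have h₂₃ := abs_wedgeCoord_reMulExp_le c d z z t
  simp only [norm_one, one_mul, Complex.ofReal_re] at h₁₂ h₁₃
  have hexp : B * Real.exp ((z.re + z.re) * t) ≤ B * Real.exp ((s + z.re) * t) := by gcongr
  refine (sqrt_sq_add_sq_add_sq_le _ _ _).trans ?_
  linarith

theorem integrableOn_Ici_of_abs_le_mul_exp {f : ℝ → ℝ} {c C r : ℝ} (hr : r < 0)
    (hf : AEStronglyMeasurable f (volume.restrict (Set.Ici c)))
    (hbound : ∀ x, c ≤ x → |f x| ≤ C * Real.exp (r * x)) :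
    IntegrableOn f (Set.Ici c) := by
  have hexp : IntegrableOn (fun x => C * Real.exp (r * x)) (Set.Ici c) := by
    rw [integrableOn_Ici_iff_integrableOn_Ioi]
    exact (integrableOn_exp_mul_Ioi hr c).const_mul C
  exact hexp.mono' hf ((ae_restrict_iff' measurableSet_Ici).mpr
    (Filter.Eventually.of_forall hbound))

theorem stmt8_general (s a b : ℝ) (hsa : a < s) (hs : 0 < s)
    (σ₁ σ₂ σ₃ : ℝ → ℝ)
    (hσ₁ : ∀ x, σ₁ x = Real.exp (s * x))
    (hσ₂ : ∀ x, σ₂ x = Real.exp (a * x) * Real.cos (b * x))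
    (hσ₃ : ∀ x, σ₃ x = Real.exp (a * x) * Real.sin (b * x))
    (wedgeSq speedSq : ℝ → ℝ)
    (hw : ∀ x, wedgeSq x =
      (deriv σ₁ x * deriv (deriv σ₂) x - deriv σ₂ x * deriv (deriv σ₁) x) ^ 2
      + (deriv σ₁ x * deriv (deriv σ₃) x - deriv σ₃ x * deriv (deriv σ₁) x) ^ 2
      + (deriv σ₂ x * deriv (deriv σ₃) x - deriv σ₃ x * deriv (deriv σ₂) x) ^ 2)
    (hsp : ∀ x, speedSq x = (deriv σ₁ x) ^ 2 + (deriv σ₂ x) ^ 2 + (deriv σ₃ x) ^ 2) :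
    IntegrableOn (fun x => Real.sqrt (wedgeSq x) / speedSq x) (Set.Ici (0:ℝ)) := by
  have hmeas : Measurable fun x => √(wedgeSq x) / speedSq x := by
    rw [funext hw, funext hsp]; fun_prop
  obtain ⟨z, rfl, rfl, rfl⟩ : ∃ z : ℂ, z.re = a ∧
      σ₂ = reMulExp 1 z ∧ σ₃ = reMulExp (-Complex.I) z :=
    ⟨a + b * Complex.I, by simp, funext fun x => by simp [hσ₂, reMulExp, Complex.exp_re],
      funext fun x => by simp [hσ₃, reMulExp, Complex.exp_im]⟩
  obtain rfl : σ₁ = reMulExp 1 s := funext fun x => by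
    rw [hσ₁, ← Complex.ofReal_one, reMulExp_ofReal, one_mul]
  obtain ⟨K, hK⟩ := exists_sqrt_wedge_reMulExp_le s 1 (-Complex.I) z hsa.le
  have hspeed : ∀ x, (s * Real.exp (s * x)) ^ 2 ≤ speedSq x := fun x => by
    rw [hsp, deriv_reMulExp, one_mul, reMulExp_ofReal]
    nlinarith [sq_nonneg (deriv (reMulExp 1 z) x), sq_nonneg (deriv (reMulExp (-Complex.I) z) x)]
  refine integrableOn_Ici_of_abs_le_mul_exp (C := K / s ^ 2) (r := z.re - s) (by linarith)
    hmeas.aestronglyMeasurable fun x hx => ?_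
  have hpos : 0 < (s * Real.exp (s * x)) ^ 2 := by positivity
  rw [abs_of_nonneg (div_nonneg (Real.sqrt_nonneg _) (hpos.le.trans (hspeed x)))]
  calc √(wedgeSq x) / speedSq x
      ≤ K * Real.exp ((s + z.re) * x) / (s * Real.exp (s * x)) ^ 2 :=
        div_le_div₀ ((Real.sqrt_nonneg _).trans (hK x hx)) (hw x ▸ hK x hx) hpos (hspeed x)
    _ = K / s ^ 2 * Real.exp ((z.re - s) * x) := by
        rw [show (s + z.re) * x = (z.re - s) * x + s * x + s * x by ring, Real.exp_add,
          Real.exp_add]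
        field_simp

theorem stmt8 (s a b : ℝ) (hsa : a < s) (hs : 0 < s) (hb : b ≠ 0)
    (σ₁ σ₂ σ₃ : ℝ → ℝ)
    (hσ₁ : ∀ x, σ₁ x = Real.exp (s * x))
    (hσ₂ : ∀ x, σ₂ x = Real.exp (a * x) * Real.cos (b * x))
    (hσ₃ : ∀ x, σ₃ x = Real.exp (a * x) * Real.sin (b * x))
    (wedgeSq speedSq : ℝ → ℝ)
    (hw : ∀ x, wedgeSq x =
      (deriv σ₁ x * deriv (deriv σ₂) x - deriv σ₂ x * deriv (deriv σ₁) x) ^ 2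
      + (deriv σ₁ x * deriv (deriv σ₃) x - deriv σ₃ x * deriv (deriv σ₁) x) ^ 2
      + (deriv σ₂ x * deriv (deriv σ₃) x - deriv σ₃ x * deriv (deriv σ₂) x) ^ 2)
    (hsp : ∀ x, speedSq x = (deriv σ₁ x) ^ 2 + (deriv σ₂ x) ^ 2 + (deriv σ₃ x) ^ 2) :
    IntegrableOn (fun x => Real.sqrt (wedgeSq x) / speedSq x) (Set.Ici (0:ℝ)) :=
  stmt8_general s a b hsa hs σ₁ σ₂ σ₃ hσ₁ hσ₂ hσ₃ wedgeSq speedSq hw hsp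
end

section
/- Let a ≥ s with a > 0 and b ≠ 0, and σ(x) = (e^{sx}, e^{ax} cos(bx), e^{ax} sin(bx)). Then there is a constant c > 0 with ‖σ'(x) ∧ σ''(x)‖ / ‖σ'(x)‖² ≥ c for all x ≥ 0, and hence ∫_0^∞ (‖σ' ∧ σ''‖/‖σ'‖²) dx = ∞. -/
/-! The planar part `(e^{ax} cos bx, e^{ax} sin bx)` of `σ` alone contributes `e^{2ax} |b| (a² + b²)`
to `‖σ' ∧ σ''‖`, while `‖σ'‖² = s² e^{2sx} + (a² + b²) e^{2ax} ≤ (s² + a² + b²) e^{2ax}` for `x ≥ 0`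
because `s ≤ a`. Hence the integrand is at least `|b| (a² + b²) / (s² + a² + b²)`, and a positive
constant is not integrable on a half-line. -/

open MeasureTheory Real

lemma not_integrableOn_of_pos_le {α : Type*} [MeasurableSpace α] {μ : Measure α} {s : Set α}
    {f : α → ℝ} {c : ℝ} (hs : MeasurableSet s) (hμs : μ s = ⊤) (hc : 0 < c)
    (hf : ∀ x ∈ s, c ≤ f x) : ¬ IntegrableOn f s μ := by
  intro hfs
  have hcs : IntegrableOn (fun _ ↦ c) s μ :=
    Integrable.mono hfs aestronglyMeasurable_const <|
      (ae_restrict_iff' hs).2 <| .of_forall fun x hx ↦ by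
        rw [norm_of_nonneg hc.le]
        exact (hf x hx).trans (le_abs_self _)
  simp [integrableOn_const_iff, hc.ne', hμs] at hcs

lemma deriv_exp_mul (s : ℝ) : deriv (fun x ↦ exp (s * x)) = fun x ↦ s * exp (s * x) := by
  funext x
  simpa [mul_comm] using ((hasDerivAt_id x).const_mul s).exp.deriv

/-- The family `exp (a x) (p cos (b x) + q sin (b x))` is closed under differentiation. -/
lemma deriv_exp_mul_cos_add_sin (a b p q : ℝ) :
    deriv (fun x ↦ exp (a * x) * (p * cos (b * x) + q * sin (b * x))) =
      fun x ↦ exp (a * x) * ((a * p + b * q) * cos (b * x) + (a * q - b * p) * sin (b * x)) := by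
  funext x
  have hax := ((hasDerivAt_id x).const_mul a).exp
  have hbx := (hasDerivAt_id x).const_mul b
  refine (hax.mul ((hbx.cos.const_mul p).add (hbx.sin.const_mul q))).deriv.trans ?_
  simp only [id, mul_one, Pi.add_apply]
  ring

lemma exp_mul_cos_eq (a b : ℝ) :
    (fun x ↦ exp (a * x) * cos (b * x)) =
      fun x ↦ exp (a * x) * (1 * cos (b * x) + 0 * sin (b * x)) := by
  simp

lemma exp_mul_sin_eq (a b : ℝ) :
    (fun x ↦ exp (a * x) * sin (b * x)) =
      fun x ↦ exp (a * x) * (0 * cos (b * x) + 1 * sin (b * x)) := by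
  simp

lemma deriv_wedge_exp_mul_cos_sin (a b x : ℝ) :
    deriv (fun x ↦ exp (a * x) * cos (b * x)) x * deriv (deriv fun x ↦ exp (a * x) * sin (b * x)) x
      - deriv (fun x ↦ exp (a * x) * sin (b * x)) x
        * deriv (deriv fun x ↦ exp (a * x) * cos (b * x)) x
      = exp (a * x) ^ 2 * (b * (a ^ 2 + b ^ 2)) := by
  rw [exp_mul_cos_eq, exp_mul_sin_eq]
  simp only [deriv_exp_mul_cos_add_sin]
  linear_combination exp (a * x) ^ 2 * (b * (a ^ 2 + b ^ 2)) * sin_sq_add_cos_sq (b * x)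

lemma deriv_sq_add_sq_exp_mul_cos_sin (a b x : ℝ) :
    deriv (fun x ↦ exp (a * x) * cos (b * x)) x ^ 2
      + deriv (fun x ↦ exp (a * x) * sin (b * x)) x ^ 2 = exp (a * x) ^ 2 * (a ^ 2 + b ^ 2) := by
  rw [exp_mul_cos_eq, exp_mul_sin_eq]
  simp only [deriv_exp_mul_cos_add_sin]
  linear_combination exp (a * x) ^ 2 * (a ^ 2 + b ^ 2) * sin_sq_add_cos_sq (b * x)

theorem stmt9_general (s a b : ℝ) (hsa : s ≤ a) (hb : b ≠ 0)
    (σ₁ σ₂ σ₃ : ℝ → ℝ)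
    (hσ₁ : ∀ x, σ₁ x = Real.exp (s * x))
    (hσ₂ : ∀ x, σ₂ x = Real.exp (a * x) * Real.cos (b * x))
    (hσ₃ : ∀ x, σ₃ x = Real.exp (a * x) * Real.sin (b * x))
    (wedgeSq speedSq : ℝ → ℝ)
    (hw : ∀ x, wedgeSq x =
      (deriv σ₁ x * deriv (deriv σ₂) x - deriv σ₂ x * deriv (deriv σ₁) x) ^ 2
      + (deriv σ₁ x * deriv (deriv σ₃) x - deriv σ₃ x * deriv (deriv σ₁) x) ^ 2
      + (deriv σ₂ x * deriv (deriv σ₃) x - deriv σ₃ x * deriv (deriv σ₂) x) ^ 2)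
    (hsp : ∀ x, speedSq x = (deriv σ₁ x) ^ 2 + (deriv σ₂ x) ^ 2 + (deriv σ₃ x) ^ 2) :
    (∃ c > (0:ℝ), ∀ x ≥ (0:ℝ), c ≤ Real.sqrt (wedgeSq x) / speedSq x) ∧
    ¬ IntegrableOn (fun x => Real.sqrt (wedgeSq x) / speedSq x) (Set.Ici (0:ℝ)) := by
  obtain rfl : σ₁ = fun x ↦ exp (s * x) := funext hσ₁
  obtain rfl : σ₂ = fun x ↦ exp (a * x) * cos (b * x) := funext hσ₂
  obtain rfl : σ₃ = fun x ↦ exp (a * x) * sin (b * x) := funext hσ₃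
  have hab : 0 < a ^ 2 + b ^ 2 := by positivity
  have hwedge x : exp (a * x) ^ 2 * (|b| * (a ^ 2 + b ^ 2)) ≤ sqrt (wedgeSq x) := by
    have h : |exp (a * x) ^ 2 * (b * (a ^ 2 + b ^ 2))| ≤ sqrt (wedgeSq x) := abs_le_sqrt <| by
      rw [hw, deriv_wedge_exp_mul_cos_sin]
      exact le_add_of_nonneg_left (by positivity)
    simpa [abs_mul, abs_of_pos hab] using h
  have hspeed x : speedSq x = (s * exp (s * x)) ^ 2 + exp (a * x) ^ 2 * (a ^ 2 + b ^ 2) := by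
    rw [hsp, add_assoc, deriv_sq_add_sq_exp_mul_cos_sin, deriv_exp_mul]
  have hspeed_pos x : 0 < speedSq x := by rw [hspeed]; positivity
  have hspeed_le x (hx : 0 ≤ x) : speedSq x ≤ exp (a * x) ^ 2 * (s ^ 2 + (a ^ 2 + b ^ 2)) := by
    have : exp (s * x) ^ 2 ≤ exp (a * x) ^ 2 := by gcongr
    rw [hspeed, mul_pow]
    linarith [mul_le_mul_of_nonneg_left this (sq_nonneg s)]
  have hc : 0 < |b| * (a ^ 2 + b ^ 2) / (s ^ 2 + (a ^ 2 + b ^ 2)) := by positivity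
  have hbound : ∀ x ≥ 0,
      |b| * (a ^ 2 + b ^ 2) / (s ^ 2 + (a ^ 2 + b ^ 2)) ≤ sqrt (wedgeSq x) / speedSq x := by
    intro x hx
    rw [← mul_div_mul_left _ _ (pow_pos (exp_pos (a * x)) 2).ne']
    exact div_le_div₀ (sqrt_nonneg _) (hwedge x) (hspeed_pos x) (hspeed_le x hx)
  exact ⟨⟨_, hc, hbound⟩, not_integrableOn_of_pos_le measurableSet_Ici (by simp) hc hbound⟩

theorem stmt9 (s a b : ℝ) (hsa : s ≤ a) (ha : 0 < a) (hb : b ≠ 0)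
    (σ₁ σ₂ σ₃ : ℝ → ℝ)
    (hσ₁ : ∀ x, σ₁ x = Real.exp (s * x))
    (hσ₂ : ∀ x, σ₂ x = Real.exp (a * x) * Real.cos (b * x))
    (hσ₃ : ∀ x, σ₃ x = Real.exp (a * x) * Real.sin (b * x))
    (wedgeSq speedSq : ℝ → ℝ)
    (hw : ∀ x, wedgeSq x =
      (deriv σ₁ x * deriv (deriv σ₂) x - deriv σ₂ x * deriv (deriv σ₁) x) ^ 2
      + (deriv σ₁ x * deriv (deriv σ₃) x - deriv σ₃ x * deriv (deriv σ₁) x) ^ 2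
      + (deriv σ₂ x * deriv (deriv σ₃) x - deriv σ₃ x * deriv (deriv σ₂) x) ^ 2)
    (hsp : ∀ x, speedSq x = (deriv σ₁ x) ^ 2 + (deriv σ₂ x) ^ 2 + (deriv σ₃ x) ^ 2) :
    (∃ c > (0:ℝ), ∀ x ≥ (0:ℝ), c ≤ Real.sqrt (wedgeSq x) / speedSq x) ∧
    ¬ IntegrableOn (fun x => Real.sqrt (wedgeSq x) / speedSq x) (Set.Ici (0:ℝ)) :=
  stmt9_general s a b hsa hb σ₁ σ₂ σ₃ hσ₁ hσ₂ hσ₃ wedgeSq speedSq hw hsp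
end

section
/- Let n ≥ 2 and σ(x) = (1, x, x², ..., x^{n−1}) : ℝ → ℝ^n. Then ∫_{−∞}^{∞} (‖σ'(x) ∧ σ''(x)‖ / ‖σ'(x)‖²) dx < ∞, i.e. the moment curve's derivative curve has finite total first curvature. -/
/-!
For `σ_i = x ^ i` the cross terms are `σ_i' σ_j'' - σ_j' σ_i'' = i j (j - i) x ^ (i + j - 3)`,
while `‖σ'‖² = ∑ i² x ^ (2 (i - 1))` dominates every `(x ^ k)²` with `k ≤ n - 2`. Splitting
`x ^ (i + j - 3) (1 + x²)` into two monomials and bounding each by AM-GM against these squares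
gives `‖σ' ∧ σ''‖ ≤ 2 n⁴ ‖σ'‖² / (1 + x²)`, so the integrand is dominated by `2 n⁴ / (1 + x²)`.
-/

open MeasureTheory Finset

lemma deriv_deriv_pow_field (j : ℕ) (x : ℝ) :
    deriv (deriv fun y : ℝ => y ^ j) x = j * (j - 1) * x ^ (j - 2) := by
  rw [show deriv (deriv fun y : ℝ => y ^ j) = deriv^[2] (fun y : ℝ => y ^ j) from rfl,
    iter_deriv_pow]
  simp [prod_range_succ]

lemma wedge_moment_eq (i j : ℕ) (x : ℝ) :
    deriv (fun y : ℝ => y ^ i) x * deriv (deriv fun y : ℝ => y ^ j) x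
      - deriv (fun y : ℝ => y ^ j) x * deriv (deriv fun y : ℝ => y ^ i) x
      = i * j * (j - i) * x ^ (i + j - 3) := by
  simp only [deriv_pow_field, deriv_deriv_pow_field]
  rcases i with _ | _ | i
  · simp
  · rcases j with _ | _ | j
    · simp
    · simp
    · simp [show 1 + (j + 2) - 3 = j by omega]
  · rcases j with _ | _ | j
    · simp
    · simp [show i + 2 + 1 - 3 = i by omega]
      ring
    · simp [show i + 2 + (j + 2) - 3 = i + 1 + j by omega, pow_add]
      ring

lemma sq_pow_le_sum_sq_deriv_pow {n k : ℕ} (hk : k + 1 < n) (x : ℝ) :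
    (x ^ k) ^ 2 ≤ ∑ i : Fin n, deriv (fun y : ℝ => y ^ (i : ℕ)) x ^ 2 := calc
  (x ^ k) ^ 2 ≤ ((k + 1 : ℕ) * x ^ k) ^ 2 := by
    rw [mul_pow]
    exact le_mul_of_one_le_left (sq_nonneg _) (one_le_pow₀ (by simp))
  _ = deriv (fun y : ℝ => y ^ ((⟨k + 1, hk⟩ : Fin n) : ℕ)) x ^ 2 := by simp
  _ ≤ _ := single_le_sum (f := fun i : Fin n => deriv (fun y : ℝ => y ^ (i : ℕ)) x ^ 2)
    (fun _ _ => sq_nonneg _) (mem_univ _)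

lemma abs_pow_add_le (x : ℝ) (a b : ℕ) : |x ^ (a + b)| ≤ ((x ^ a) ^ 2 + (x ^ b) ^ 2) / 2 := by
  rw [pow_add, abs_mul, ← sq_abs (x ^ a), ← sq_abs (x ^ b)]
  linarith [two_mul_le_add_sq |x ^ a| |x ^ b|]

lemma abs_wedge_moment_mul_le {n i j : ℕ} (hij : i < j) (hjn : j < n) (x : ℝ) :
    |deriv (fun y : ℝ => y ^ i) x * deriv (deriv fun y : ℝ => y ^ j) x
      - deriv (fun y : ℝ => y ^ j) x * deriv (deriv fun y : ℝ => y ^ i) x| * (1 + x ^ 2)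
      ≤ 2 * n ^ 3 * ∑ i : Fin n, deriv (fun y : ℝ => y ^ (i : ℕ)) x ^ 2 := by
  set S := ∑ i : Fin n, deriv (fun y : ℝ => y ^ (i : ℕ)) x ^ 2
  have hS : 0 ≤ S := by positivity
  rw [wedge_moment_eq]
  rcases Nat.eq_zero_or_pos i with rfl | hi
  · simp only [CharP.cast_eq_zero, zero_mul, abs_zero]
    positivity
  have hpow : |x ^ (i + j - 3)| * (1 + x ^ 2) ≤ 2 * S := by
    have hsq : ∀ k, k + 1 < n → (x ^ k) ^ 2 ≤ S := fun k hk => sq_pow_le_sum_sq_deriv_pow hk x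
    have h₁ := abs_pow_add_le x (i - 1) (j - 2)
    have h₂ := abs_pow_add_le x i (j - 1)
    rw [show i - 1 + (j - 2) = i + j - 3 by omega] at h₁
    rw [show i + (j - 1) = i + j - 3 + 2 by omega, pow_add, abs_mul,
      abs_of_nonneg (sq_nonneg x)] at h₂
    rw [mul_add, mul_one]
    linarith [hsq (i - 1) (by omega), hsq (j - 2) (by omega), hsq i (by omega),
      hsq (j - 1) (by omega)]
  have hcoef : |(i * j * (j - i) : ℝ)| ≤ n ^ 3 := by
    have hji : (0 : ℝ) ≤ j - i := by simp [hij.le]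
    have hjn' : (j : ℝ) ≤ n := by exact_mod_cast hjn.le
    rw [abs_of_nonneg (by positivity)]
    calc (i * j * (j - i) : ℝ) ≤ n * n * n := by
          gcongr
          · exact_mod_cast (hij.trans hjn).le
          · linarith [(Nat.cast_nonneg (α := ℝ) i)]
      _ = n ^ 3 := by ring
  calc |(i * j * (j - i) : ℝ) * x ^ (i + j - 3)| * (1 + x ^ 2)
      = |(i * j * (j - i) : ℝ)| * (|x ^ (i + j - 3)| * (1 + x ^ 2)) := by rw [abs_mul, mul_assoc]
    _ ≤ n ^ 3 * (2 * S) := by gcongr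
    _ = 2 * n ^ 3 * S := by ring

lemma sqrt_sum_ite_sq_le {n : ℕ} {w : Fin n → Fin n → ℝ} {c : ℝ} (hc : 0 ≤ c)
    (hw : ∀ i j, i < j → |w i j| ≤ c) :
    √(∑ i : Fin n, ∑ j : Fin n, if i < j then w i j ^ 2 else 0) ≤ n * c := by
  rw [Real.sqrt_le_iff]
  refine ⟨by positivity, ?_⟩
  calc _ ≤ ∑ _i : Fin n, ∑ _j : Fin n, c ^ 2 := by
        refine sum_le_sum fun i _ => sum_le_sum fun j _ => ?_
        split_ifs with hij
        · exact sq_le_sq' (neg_le_of_abs_le (hw i j hij)) (le_of_abs_le (hw i j hij))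
        · positivity
    _ = (n * c) ^ 2 := by simp only [sum_const, card_univ, Fintype.card_fin, nsmul_eq_mul]; ring

theorem stmt10_general (n : ℕ)
    (σ : Fin n → ℝ → ℝ) (hσ : ∀ i x, σ i x = x ^ (i : ℕ))
    (wedgeSq speedSq : ℝ → ℝ)
    (hw : ∀ x, wedgeSq x = ∑ i : Fin n, ∑ j : Fin n,
      if i < j then (deriv (σ i) x * deriv (deriv (σ j)) x
        - deriv (σ j) x * deriv (deriv (σ i)) x) ^ 2 else 0)
    (hsp : ∀ x, speedSq x = ∑ i : Fin n, (deriv (σ i) x) ^ 2) :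
    Integrable (fun x => Real.sqrt (wedgeSq x) / speedSq x) := by
  have hw_meas : Measurable wedgeSq := by
    rw [funext hw]
    refine measurable_sum _ fun i _ => measurable_sum _ fun j _ => ?_
    by_cases hij : i < j <;> simp only [hij, if_true, if_false] <;> fun_prop
  have hsp_meas : Measurable speedSq := by
    rw [funext hsp]
    fun_prop
  have hmeas : Measurable fun x => Real.sqrt (wedgeSq x) / speedSq x := by fun_prop
  obtain rfl : σ = fun (i : Fin n) (y : ℝ) => y ^ (i : ℕ) := funext₂ hσ
  refine (integrable_inv_one_add_sq.const_mul (2 * n ^ 4 : ℝ)).mono' hmeas.aestronglyMeasurable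
    (ae_of_all _ fun x => ?_)
  have hS : 0 ≤ speedSq x := by rw [hsp]; positivity
  rw [Real.norm_of_nonneg (by positivity)]
  refine div_le_of_le_mul₀ hS (by positivity) ?_
  calc √(wedgeSq x) ≤ n * (2 * n ^ 3 * speedSq x / (1 + x ^ 2)) := by
        rw [hw, hsp]
        exact sqrt_sum_ite_sq_le (by positivity) fun i j hij =>
          (le_div_iff₀ (by positivity)).2 (abs_wedge_moment_mul_le hij j.isLt x)
    _ = 2 * n ^ 4 * (1 + x ^ 2)⁻¹ * speedSq x := by ring

theorem stmt10 (n : ℕ) (hn : 2 ≤ n)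
    (σ : Fin n → ℝ → ℝ) (hσ : ∀ i x, σ i x = x ^ (i : ℕ))
    (wedgeSq speedSq : ℝ → ℝ)
    (hw : ∀ x, wedgeSq x = ∑ i : Fin n, ∑ j : Fin n,
      if i < j then (deriv (σ i) x * deriv (deriv (σ j)) x
        - deriv (σ j) x * deriv (deriv (σ i)) x) ^ 2 else 0)
    (hsp : ∀ x, speedSq x = ∑ i : Fin n, (deriv (σ i) x) ^ 2) :
    Integrable (fun x => Real.sqrt (wedgeSq x) / speedSq x) :=
  stmt10_general n σ hσ wedgeSq speedSq hw hsp
end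

section
/- Let s₁ > s₂ > ... > s_k be reals with s₁ > 0, and σ(x) = (e^{s₁x}, ..., e^{s_k x}). Then there exist constants C₁, C₂, ε > 0 such that for all x ≥ 0: ‖σ'(x)‖² ≥ C₁ e^{2 s₁ x} and ‖σ'(x) ∧ σ''(x)‖ ≤ C₂ e^{(2 s₁ − ε) x}, where ε = s₁ − s₂; consequently ∫_0^∞ ‖σ' ∧ σ''‖/‖σ'‖² dx < ∞. -/
/-!
Only the two largest exponents matter. The speed ‖σ'‖² contains the term `s₁² e^{2 s₁ x}`, while
the `(i, j)` term of ‖σ' ∧ σ''‖² is `(s_i s_j (s_j - s_i))² e^{2 (s_i + s_j) x}` and, for `i < j`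
and `x ≥ 0`, `s_i + s_j ≤ s₁ + s₂`. Hence the integrand is `O(e^{-(s₁ - s₂) x})`.
-/

open MeasureTheory Finset Real

theorem integrableOn_Ici_of_le_mul_exp_neg {f : ℝ → ℝ} {a C c : ℝ} (hc : 0 < c)
    (hf : AEStronglyMeasurable f (volume.restrict (Set.Ici a)))
    (hle : ∀ x ≥ a, ‖f x‖ ≤ C * exp (-c * x)) :
    IntegrableOn f (Set.Ici a) := by
  have hexp : IntegrableOn (fun x => C * exp (-c * x)) (Set.Ici a) :=
    ((integrableOn_Ici_iff_integrableOn_Ioi).mpr (exp_neg_integrableOn_Ioi a hc)).const_mul C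
  refine hexp.mono' hf ?_
  rw [ae_restrict_iff' measurableSet_Ici]
  exact ae_of_all _ hle

namespace ExpCurve

variable {k : ℕ} (s : Fin k → ℝ)

-- For `σ(x) = (e^{s_i x})_i`: `speedSq s x = ‖σ'(x)‖²` and `wedgeSq s x = ‖σ'(x) ∧ σ''(x)‖²`.
noncomputable def speedSq (x : ℝ) : ℝ := ∑ i, (s i * exp (s i * x)) ^ 2

noncomputable def wedgeSq (x : ℝ) : ℝ := ∑ i, ∑ j,
  if i < j then (s i * exp (s i * x) * (s j ^ 2 * exp (s j * x))
    - s j * exp (s j * x) * (s i ^ 2 * exp (s i * x))) ^ 2 else 0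

def wedgeCoeff : ℝ := ∑ i, ∑ j, if i < j then (s i * s j * (s j - s i)) ^ 2 else 0

theorem wedgeCoeff_nonneg : 0 ≤ wedgeCoeff s :=
  sum_nonneg fun _ _ => sum_nonneg fun _ _ => by split_ifs <;> positivity

theorem speedSq_nonneg (x : ℝ) : 0 ≤ speedSq s x :=
  sum_nonneg fun _ _ => sq_nonneg _

theorem continuous_speedSq : Continuous (speedSq s) := by
  unfold speedSq; fun_prop

theorem continuous_wedgeSq : Continuous (wedgeSq s) := by
  unfold wedgeSq
  refine continuous_finsetSum _ fun i _ => continuous_finsetSum _ fun j _ => ?_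
  split_ifs <;> fun_prop

theorem sq_mul_exp_le_speedSq (i : Fin k) (x : ℝ) :
    s i ^ 2 * exp (2 * s i * x) ≤ speedSq s x := by
  have hterm : (s i * exp (s i * x)) ^ 2 = s i ^ 2 * exp (2 * s i * x) := by
    rw [mul_pow, sq (exp _), ← exp_add]; ring_nf
  rw [← hterm]
  exact single_le_sum (f := fun i => (s i * exp (s i * x)) ^ 2) (fun _ _ => sq_nonneg _)
    (mem_univ i)

theorem wedgeSq_eq (x : ℝ) : wedgeSq s x = ∑ i, ∑ j,
    if i < j then (s i * s j * (s j - s i)) ^ 2 * exp (2 * (s i + s j) * x) else 0 := by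
  refine sum_congr rfl fun i _ => sum_congr rfl fun j _ => ?_
  split_ifs
  · rw [show 2 * (s i + s j) * x = s i * x + s j * x + (s i * x + s j * x) by ring,
      exp_add, exp_add]
    ring
  · rfl

theorem wedgeSq_le_wedgeCoeff_mul_exp (hs : Antitone s) {a b : Fin k}
    (hab : ∀ i j : Fin k, i < j → a ≤ i ∧ b ≤ j) {x : ℝ} (hx : 0 ≤ x) :
    wedgeSq s x ≤ wedgeCoeff s * exp (2 * (s a + s b) * x) := by
  rw [wedgeSq_eq, wedgeCoeff, sum_mul]
  refine sum_le_sum fun i _ => ?_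
  rw [sum_mul]
  refine sum_le_sum fun j _ => ?_
  split_ifs with hij
  · obtain ⟨hai, hbj⟩ := hab i j hij
    gcongr
    exacts [hs hai, hs hbj]
  · simp

theorem sqrt_wedgeSq_le (hs : Antitone s) {a b : Fin k}
    (hab : ∀ i j : Fin k, i < j → a ≤ i ∧ b ≤ j) {x : ℝ} (hx : 0 ≤ x) :
    √(wedgeSq s x) ≤ √(wedgeCoeff s + 1) * exp ((s a + s b) * x) := by
  have hexp_sq : exp (2 * (s a + s b) * x) = exp ((s a + s b) * x) ^ 2 := by
    rw [← exp_nat_mul]; ring_nf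
  calc √(wedgeSq s x) ≤ √((wedgeCoeff s + 1) * exp ((s a + s b) * x) ^ 2) := by
        gcongr
        calc wedgeSq s x ≤ wedgeCoeff s * exp (2 * (s a + s b) * x) :=
              wedgeSq_le_wedgeCoeff_mul_exp s hs hab hx
          _ ≤ _ := by rw [hexp_sq]; gcongr; linarith
    _ = √(wedgeCoeff s + 1) * exp ((s a + s b) * x) := by
        rw [sqrt_mul' _ (sq_nonneg _), sqrt_sq (exp_pos _).le]

end ExpCurve

open ExpCurve in
theorem stmt19 (k : ℕ) (hk : 2 ≤ k) (s : Fin k → ℝ) (hs : StrictAnti s)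
    (hs1 : 0 < s ⟨0, by omega⟩)
    (wedgeSq speedSq : ℝ → ℝ)
    (hw : ∀ x, wedgeSq x = ∑ i : Fin k, ∑ j : Fin k,
      if i < j then (s i * Real.exp (s i * x) * (s j ^ 2 * Real.exp (s j * x))
        - s j * Real.exp (s j * x) * (s i ^ 2 * Real.exp (s i * x))) ^ 2 else 0)
    (hsp : ∀ x, speedSq x = ∑ i : Fin k, (s i * Real.exp (s i * x)) ^ 2) :
    ∃ C₁ > (0:ℝ), ∃ C₂ > (0:ℝ),
      (∀ x ≥ (0:ℝ),
        C₁ * Real.exp (2 * s ⟨0, by omega⟩ * x) ≤ speedSq x ∧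
        Real.sqrt (wedgeSq x)
          ≤ C₂ * Real.exp ((2 * s ⟨0, by omega⟩ - (s ⟨0, by omega⟩ - s ⟨1, by omega⟩)) * x)) ∧
      IntegrableOn (fun x => Real.sqrt (wedgeSq x) / speedSq x) (Set.Ici (0:ℝ)) := by
  obtain rfl : wedgeSq = ExpCurve.wedgeSq s := funext hw
  obtain rfl : speedSq = ExpCurve.speedSq s := funext hsp
  set a : Fin k := ⟨0, by omega⟩
  set b : Fin k := ⟨1, by omega⟩
  have hab : ∀ i j : Fin k, i < j → a ≤ i ∧ b ≤ j := fun i j hij =>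
    ⟨Nat.zero_le _, (Nat.zero_le i.val).trans_lt hij⟩
  have hgap : 0 < s a - s b := sub_pos.mpr (hs (show a < b from Nat.zero_lt_one))
  set C₁ := s a ^ 2
  set C₂ := √(wedgeCoeff s + 1)
  have hC₁ : 0 < C₁ := by positivity
  have hC₂ : 0 < C₂ := sqrt_pos.mpr (by linarith [wedgeCoeff_nonneg s])
  have hspeed : ∀ x, C₁ * exp (2 * s a * x) ≤ speedSq s x := sq_mul_exp_le_speedSq s a
  have hwedge : ∀ x ≥ (0:ℝ), √(wedgeSq s x) ≤ C₂ * exp ((s a + s b) * x) :=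
    fun x hx => sqrt_wedgeSq_le s hs.antitone hab hx
  refine ⟨C₁, hC₁, C₂, hC₂, fun x hx => ⟨hspeed x, ?_⟩, ?_⟩
  · convert hwedge x hx using 3; ring
  have hmeas := (continuous_wedgeSq s).measurable.sqrt.div (continuous_speedSq s).measurable
  refine integrableOn_Ici_of_le_mul_exp_neg (C := C₂ / C₁) hgap hmeas.aestronglyMeasurable
    fun x hx => ?_
  rw [norm_of_nonneg (div_nonneg (sqrt_nonneg _) (speedSq_nonneg s x))]
  calc √(wedgeSq s x) / speedSq s x ≤ C₂ * exp ((s a + s b) * x) / (C₁ * exp (2 * s a * x)) :=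
        div_le_div₀ (by positivity) (hwedge x hx) (by positivity) (hspeed x)
    _ = C₂ / C₁ * exp (-(s a - s b) * x) := by
        rw [mul_div_mul_comm, ← exp_sub]; ring_nf
end
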